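/- arXiv:hep-th/9509029 — 6 statements merged into one kernel-verified Lean document; each statement's English description precedes it below -/
import Mathlib

section
/- Let g be a Lie algebra over a field of characteristic zero and let r : g → g be a linear map satisfying the modified classical Yang–Baxter equation: [r X, r Y] − r([r X, Y] + [X, r Y]) = −[X, Y] for all X, Y ∈ g. Then the bracket [X, Y]_r := [r X, Y] + [X, r Y] is a Lie bracket on the underlying vector space of g (it is bilinear, alternating, and satisfies the Jacobi identity). -/
lemma jac0 {g : Type*} [LieRing g] (a b c : g) :
    ⁅⁅a, b⁆, c⁆ + ⁅⁅b, c⁆, a⁆ + ⁅⁅c, a⁆, b⁆ = 0 := by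
  have h := lie_jacobi a b c
  rw [← lie_skew c a, lie_neg] at h
  simp only [lie_lie]
  rw [← lie_skew b a, ← lie_skew c a, ← lie_skew c b]
  simp only [lie_neg]
  have : (2:ℤ) • (⁅a, ⁅b, c⁆⁆ + -⁅b, ⁅a, c⁆⁆ + ⁅c, ⁅a, b⁆⁆) = 0 := by rw [h, smul_zero]
  rw [← this]; abel

/-- If `r` satisfies the modified classical Yang–Baxter equation on a Lie
algebra `g` over a field of characteristic zero, then
`[X, Y]_r := [r X, Y] + [X, r Y]` is a Lie bracket: bilinear, alternating, Jacobi. -/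
theorem stmt0 {k : Type*} [Field k] [CharZero k]
    {g : Type*} [LieRing g] [LieAlgebra k g]
    (r : g →ₗ[k] g)
    (hr : ∀ X Y : g, ⁅r X, r Y⁆ - r (⁅r X, Y⁆ + ⁅X, r Y⁆) = -⁅X, Y⁆) :
    (∀ X : g, ⁅r X, X⁆ + ⁅X, r X⁆ = 0) ∧
    (∀ X X' Y : g, ⁅r (X + X'), Y⁆ + ⁅X + X', r Y⁆ =
      (⁅r X, Y⁆ + ⁅X, r Y⁆) + (⁅r X', Y⁆ + ⁅X', r Y⁆)) ∧
    (∀ (c : k) (X Y : g), ⁅r (c • X), Y⁆ + ⁅c • X, r Y⁆ = c • (⁅r X, Y⁆ + ⁅X, r Y⁆)) ∧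
    (∀ X Y Y' : g, ⁅r X, Y + Y'⁆ + ⁅X, r (Y + Y')⁆ =
      (⁅r X, Y⁆ + ⁅X, r Y⁆) + (⁅r X, Y'⁆ + ⁅X, r Y'⁆)) ∧
    (∀ (c : k) (X Y : g), ⁅r X, c • Y⁆ + ⁅X, r (c • Y)⁆ = c • (⁅r X, Y⁆ + ⁅X, r Y⁆)) ∧
    (∀ X Y Z : g,
      (⁅r (⁅r X, Y⁆ + ⁅X, r Y⁆), Z⁆ + ⁅⁅r X, Y⁆ + ⁅X, r Y⁆, r Z⁆) +
      (⁅r (⁅r Y, Z⁆ + ⁅Y, r Z⁆), X⁆ + ⁅⁅r Y, Z⁆ + ⁅Y, r Z⁆, r X⁆) +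
      (⁅r (⁅r Z, X⁆ + ⁅Z, r X⁆), Y⁆ + ⁅⁅r Z, X⁆ + ⁅Z, r X⁆, r Y⁆) = 0) := by
  have key : ∀ X Y : g, r (⁅r X, Y⁆ + ⁅X, r Y⁆) = ⁅r X, r Y⁆ + ⁅X, Y⁆ := by
    intro X Y
    have h := hr X Y
    have : r (⁅r X, Y⁆ + ⁅X, r Y⁆) = ⁅r X, r Y⁆ - (⁅r X, r Y⁆ - r (⁅r X, Y⁆ + ⁅X, r Y⁆)) := by
      abel
    rw [this, h]; abel
  refine ⟨?_, ?_, ?_, ?_, ?_, ?_⟩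
  · intro X; rw [← lie_skew (r X) X]; abel
  · intro X X' Y; simp [map_add]; abel
  · intro c X Y; simp [map_smul, smul_lie, lie_smul, smul_add]
  · intro X Y Y'; simp [map_add]; abel
  · intro c X Y; simp [map_smul, smul_lie, lie_smul, smul_add]
  · intro X Y Z
    rw [key, key, key]
    have h1 := jac0 (r X) (r Y) Z
    have h2 := jac0 (r Y) (r Z) X
    have h3 := jac0 (r Z) (r X) Y
    have h4 := jac0 X Y Z
    have expand :
        (⁅(⁅r X, r Y⁆ + ⁅X, Y⁆ : g), Z⁆ + ⁅⁅r X, Y⁆ + ⁅X, r Y⁆, r Z⁆) +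
        (⁅(⁅r Y, r Z⁆ + ⁅Y, Z⁆ : g), X⁆ + ⁅⁅r Y, Z⁆ + ⁅Y, r Z⁆, r X⁆) +
        (⁅(⁅r Z, r X⁆ + ⁅Z, X⁆ : g), Y⁆ + ⁅⁅r Z, X⁆ + ⁅Z, r X⁆, r Y⁆) =
        (⁅⁅r X, r Y⁆, Z⁆ + ⁅⁅r Y, Z⁆, r X⁆ + ⁅⁅Z, r X⁆, r Y⁆) +
        (⁅⁅r Y, r Z⁆, X⁆ + ⁅⁅r Z, X⁆, r Y⁆ + ⁅⁅X, r Y⁆, r Z⁆) +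
        (⁅⁅r Z, r X⁆, Y⁆ + ⁅⁅r X, Y⁆, r Z⁆ + ⁅⁅Y, r Z⁆, r X⁆) +
        (⁅⁅X, Y⁆, Z⁆ + ⁅⁅Y, Z⁆, X⁆ + ⁅⁅Z, X⁆, Y⁆) := by
      simp only [add_lie]; abel
    rw [expand, h1, h2, h3, h4]; abel
end

section
/- Let g be a Lie algebra and α : g → g a solution of the modified classical Yang–Baxter equation [αX,αY] − α([αX,Y]+[X,αY]) = −[X,Y]. Set α_± := (α ± id)/2. Then the block operator R on g ⊕ g (with componentwise Lie bracket) given by R(X,Y) = (αX − 2α_+Y, 2α_−X − αY) satisfies the modified classical Yang–Baxter equation on g ⊕ g. -/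
/-- Componentwise Lie ring structure on the product of two Lie rings. -/
instance prodLieRing (g h : Type*) [LieRing g] [LieRing h] : LieRing (g × h) where
  bracket x y := (⁅x.1, y.1⁆, ⁅x.2, y.2⁆)
  add_lie x y z := by
    show ((⁅x.1 + y.1, z.1⁆ : g), (⁅x.2 + y.2, z.2⁆ : h)) = _
    simp [add_lie, Prod.add_def]
  lie_add x y z := by
    show ((⁅x.1, y.1 + z.1⁆ : g), (⁅x.2, y.2 + z.2⁆ : h)) = _
    simp [lie_add, Prod.add_def]
  lie_self x := by
    show ((⁅x.1, x.1⁆ : g), (⁅x.2, x.2⁆ : h)) = 0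
    simp
  leibniz_lie x y z := by
    show ((⁅x.1, ⁅y.1, z.1⁆⁆ : g), (⁅x.2, ⁅y.2, z.2⁆⁆ : h)) =
      ((⁅⁅x.1, y.1⁆, z.1⁆ : g), (⁅⁅x.2, y.2⁆, z.2⁆ : h)) +
      ((⁅y.1, ⁅x.1, z.1⁆⁆ : g), (⁅y.2, ⁅x.2, z.2⁆⁆ : h))
    exact Prod.ext (leibniz_lie _ _ _) (leibniz_lie _ _ _)

/-- Componentwise Lie algebra structure on the product. -/
instance prodLieAlgebra (k g h : Type*) [CommRing k] [LieRing g] [LieRing h]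
    [LieAlgebra k g] [LieAlgebra k h] : LieAlgebra k (g × h) where
  lie_smul c x y := by
    show ((⁅x.1, c • y.1⁆ : g), (⁅x.2, c • y.2⁆ : h)) =
      c • ((⁅x.1, y.1⁆ : g), (⁅x.2, y.2⁆ : h))
    simp [Prod.smul_def, lie_smul]

/-- if `α` solves the mYBE on `g`, then the block operator
`R(X,Y) = (αX − 2α₊Y, 2α₋X − αY)` (with `2α₊ = α + id`, `2α₋ = α − id`)
solves the mYBE on `g ⊕ g` with the componentwise bracket. -/
theorem stmt1 {k : Type*} [Field k] [CharZero k]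
    {g : Type*} [LieRing g] [LieAlgebra k g]
    (α : g →ₗ[k] g)
    (hα : ∀ X Y : g, ⁅α X, α Y⁆ - α (⁅α X, Y⁆ + ⁅X, α Y⁆) = -⁅X, Y⁆)
    (R : g × g →ₗ[k] g × g)
    (hR : ∀ X Y : g, R (X, Y) = (α X - (α Y + Y), (α X - X) - α Y)) :
    ∀ P Q : g × g, ⁅R P, R Q⁆ - R (⁅R P, Q⁆ + ⁅P, R Q⁆) = -⁅P, Q⁆ := by
  have h' : ∀ A B : g, ⁅α A, α B⁆ = α ⁅α A, B⁆ + α ⁅A, α B⁆ - ⁅A, B⁆ := by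
    intro A B
    have h := hα A B
    rw [map_add, sub_eq_iff_eq_add] at h
    rw [h]; abel
  have hbr : ∀ a b : g × g, ⁅a, b⁆ = ((⁅a.1, b.1⁆ : g), (⁅a.2, b.2⁆ : g)) := fun _ _ => rfl
  rintro ⟨X, Y⟩ ⟨Z, W⟩
  simp only [hbr, hR, Prod.mk_add_mk, Prod.mk_sub_mk, Prod.neg_mk, Prod.mk.injEq]
  constructor <;>
  · simp only [lie_sub, sub_lie, lie_add, add_lie, map_add, map_sub, h']
    abel
end

section
/- Let g be a Lie algebra and let a, α, s : g → g be linear maps. Suppose the block operator R on g ⊕ g (componentwise bracket) with block matrix [[−a+α, −α−s],[α−s, −a−α]] satisfies the modified classical Yang–Baxter equation on g ⊕ g. Then the operator r := a + s satisfies the modified classical Yang–Baxter equation on g: [rX, rY] − r([rX,Y] + [X,rY]) = −[X,Y] for all X,Y ∈ g. -/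
/-- if the block operator `R = [[−a+α, −α−s],[α−s, −a−α]]` satisfies the
mYBE on `g ⊕ g` (componentwise bracket), then `r := a + s` satisfies the mYBE on `g`. -/
theorem stmt2 {k : Type*} [Field k] [CharZero k]
    {g : Type*} [LieRing g] [LieAlgebra k g]
    (a α s : g →ₗ[k] g)
    (R : g × g →ₗ[k] g × g)
    (hR : ∀ X Y : g, R (X, Y) = ((-(a X) + α X) + (-(α Y) - s Y),
      (α X - s X) + (-(a Y) - α Y)))
    (hYBE : ∀ P Q : g × g, ⁅R P, R Q⁆ - R (⁅R P, Q⁆ + ⁅P, R Q⁆) = -⁅P, Q⁆) :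
    ∀ X Y : g, ⁅a X + s X, a Y + s Y⁆ -
      ((a + s) (⁅a X + s X, Y⁆ + ⁅X, a Y + s Y⁆)) = -⁅X, Y⁆ := by
  intro X Y
  have hb : ∀ p q : g × g, ⁅p, q⁆ = ((⁅p.1, q.1⁆ : g), (⁅p.2, q.2⁆ : g)) := fun _ _ => rfl
  have hdiag : ∀ Z : g, R (Z, Z) = (-(a Z + s Z), -(a Z + s Z)) := by
    intro Z
    rw [hR]
    refine Prod.ext ?_ ?_ <;> simp <;> abel_nf
  have h := hYBE (X, X) (Y, Y)
  rw [hdiag X, hdiag Y] at h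
  simp only [hb, Prod.mk_add_mk, neg_lie, lie_neg, neg_neg] at h
  have harg : ((-⁅a X + s X, Y⁆ + -⁅X, a Y + s Y⁆ : g),
      (-⁅a X + s X, Y⁆ + -⁅X, a Y + s Y⁆ : g)) =
      ((-(⁅a X + s X, Y⁆ + ⁅X, a Y + s Y⁆) : g), -(⁅a X + s X, Y⁆ + ⁅X, a Y + s Y⁆)) := by
    refine Prod.ext ?_ ?_ <;> abel
  rw [harg, hdiag] at h
  have h1 := congrArg Prod.fst h
  simp only [Prod.fst_sub, Prod.fst_neg] at h1
  simp only [LinearMap.add_apply, map_add, map_neg, neg_neg] at h1 ⊢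
  convert h1 using 2
  abel
end

section
/- Let g be a Lie algebra over a field k of characteristic 0, ω : g × g → k a skew-symmetric bilinear form satisfying the invariance condition ω([X,Y],Z) = ω(X,[Y,Z]) for all X,Y,Z ∈ g, and r : g → g a solution of the modified classical Yang–Baxter equation. Define [X,Y]_r := [rX,Y] + [X,rY] and ω_r(X,Y) := ω(rX,Y) + ω(X,rY). Then ω_r is skew-symmetric and is a 2-cocycle on the Lie algebra (g, [·,·]_r); consequently the bracket [(X,a),(Y,b)] := ([X,Y]_r, ω_r(X,Y)) makes g ⊕ k into a Lie algebra. -/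
section Stmt5Aux

variable {k : Type*} [Field k] [CharZero k]
variable {g : Type*} [LieRing g] [LieAlgebra k g]

lemma stmt5_aux_zero (ω : g →ₗ[k] g →ₗ[k] k)
    (hskew : ∀ X Y : g, ω X Y = -ω Y X)
    (hinv : ∀ X Y Z : g, ω ⁅X, Y⁆ Z = ω X ⁅Y, Z⁆) :
    ∀ X Y Z : g, ω ⁅X, Y⁆ Z = 0 := by
  intro X Y Z
  have h : ω ⁅X, Y⁆ Z = -ω ⁅X, Y⁆ Z := by
    calc ω ⁅X, Y⁆ Z = ω X ⁅Y, Z⁆ := hinv X Y Z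
    _ = -ω ⁅Y, Z⁆ X := hskew X ⁅Y, Z⁆
    _ = -ω Y ⁅Z, X⁆ := by rw [hinv Y Z X]
    _ = ω ⁅Z, X⁆ Y := by rw [hskew Y ⁅Z, X⁆]; ring
    _ = ω Z ⁅X, Y⁆ := hinv Z X Y
    _ = -ω ⁅X, Y⁆ Z := hskew Z ⁅X, Y⁆
  linear_combination h / 2

lemma stmt5_aux_jac (a b c : g) :
    ⁅⁅a, b⁆, c⁆ + ⁅⁅b, c⁆, a⁆ + ⁅⁅c, a⁆, b⁆ = 0 := by
  have h := lie_jacobi a b c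
  rw [← lie_skew ⁅a, b⁆ c, ← lie_skew ⁅b, c⁆ a, ← lie_skew ⁅c, a⁆ b]
  rw [show -⁅c, ⁅a, b⁆⁆ + -⁅a, ⁅b, c⁆⁆ + -⁅b, ⁅c, a⁆⁆ =
      -(⁅a, ⁅b, c⁆⁆ + ⁅b, ⁅c, a⁆⁆ + ⁅c, ⁅a, b⁆⁆) from by abel, h, neg_zero]

omit [CharZero k] in
lemma stmt5_aux_r (r : g →ₗ[k] g)
    (hr : ∀ X Y : g, ⁅r X, r Y⁆ - r (⁅r X, Y⁆ + ⁅X, r Y⁆) = -⁅X, Y⁆) :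
    ∀ X Y : g, r (⁅r X, Y⁆ + ⁅X, r Y⁆) = ⁅r X, r Y⁆ + ⁅X, Y⁆ := by
  intro X Y
  have h2 := sub_eq_iff_eq_add.mp (hr X Y)
  rw [h2]; abel

omit [CharZero k] in
lemma stmt5_aux_brkjac (r : g →ₗ[k] g)
    (hr : ∀ X Y : g, ⁅r X, r Y⁆ - r (⁅r X, Y⁆ + ⁅X, r Y⁆) = -⁅X, Y⁆) :
    ∀ X Y Z : g,
      (⁅r (⁅r X, Y⁆ + ⁅X, r Y⁆), Z⁆ + ⁅⁅r X, Y⁆ + ⁅X, r Y⁆, r Z⁆) +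
      (⁅r (⁅r Y, Z⁆ + ⁅Y, r Z⁆), X⁆ + ⁅⁅r Y, Z⁆ + ⁅Y, r Z⁆, r X⁆) +
      (⁅r (⁅r Z, X⁆ + ⁅Z, r X⁆), Y⁆ + ⁅⁅r Z, X⁆ + ⁅Z, r X⁆, r Y⁆) = 0 := by
  intro X Y Z
  rw [stmt5_aux_r r hr, stmt5_aux_r r hr, stmt5_aux_r r hr]
  simp only [add_lie]
  have e1 := stmt5_aux_jac (r X) (r Y) Z
  have e2 := stmt5_aux_jac (r X) Y (r Z)
  have e3 := stmt5_aux_jac X (r Y) (r Z)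
  have e4 := stmt5_aux_jac X Y Z
  have hJ : (⁅⁅r X, r Y⁆, Z⁆ + ⁅⁅r Y, Z⁆, r X⁆ + ⁅⁅Z, r X⁆, r Y⁆) +
      (⁅⁅r X, Y⁆, r Z⁆ + ⁅⁅Y, r Z⁆, r X⁆ + ⁅⁅r Z, r X⁆, Y⁆) +
      (⁅⁅X, r Y⁆, r Z⁆ + ⁅⁅r Y, r Z⁆, X⁆ + ⁅⁅r Z, X⁆, r Y⁆) +
      (⁅⁅X, Y⁆, Z⁆ + ⁅⁅Y, Z⁆, X⁆ + ⁅⁅Z, X⁆, Y⁆) = 0 := by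
    rw [e1, e2, e3, e4]; simp
  rw [← hJ]
  abel

end Stmt5Aux

/-- twisting an invariant skew form `ω` by a solution `r` of the mYBE:
`ω_r(X,Y) := ω(rX,Y) + ω(X,rY)` is skew and a 2-cocycle for the bracket
`[X,Y]_r := [rX,Y] + [X,rY]`; consequently `[(X,a),(Y,b)] := ([X,Y]_r, ω_r(X,Y))`
makes `g ⊕ k` into a Lie algebra. -/
theorem stmt5 {k : Type*} [Field k] [CharZero k]
    {g : Type*} [LieRing g] [LieAlgebra k g]
    (ω : g →ₗ[k] g →ₗ[k] k)
    (hskew : ∀ X Y : g, ω X Y = -ω Y X)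
    (hinv : ∀ X Y Z : g, ω ⁅X, Y⁆ Z = ω X ⁅Y, Z⁆)
    (r : g →ₗ[k] g)
    (hr : ∀ X Y : g, ⁅r X, r Y⁆ - r (⁅r X, Y⁆ + ⁅X, r Y⁆) = -⁅X, Y⁆) :
    letI brk : g → g → g := fun X Y => ⁅r X, Y⁆ + ⁅X, r Y⁆
    letI ωr : g → g → k := fun X Y => ω (r X) Y + ω X (r Y)
    -- ω_r is skew-symmetric
    (∀ X Y : g, ωr X Y = -ωr Y X) ∧
    -- ω_r is a 2-cocycle on (g, [·,·]_r)
    (∀ X Y Z : g, ωr (brk X Y) Z + ωr (brk Y Z) X + ωr (brk Z X) Y = 0) ∧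
    -- consequently the extended bracket on g ⊕ k is a Lie bracket
    (letI B : g × k → g × k → g × k := fun P Q => (brk P.1 Q.1, ωr P.1 Q.1)
     (∀ P : g × k, B P P = 0) ∧
     (∀ P P' Q : g × k, B (P + P') Q = B P Q + B P' Q) ∧
     (∀ P Q Q' : g × k, B P (Q + Q') = B P Q + B P Q') ∧
     (∀ (c : k) (P Q : g × k), B (c • P) Q = c • B P Q) ∧
     (∀ (c : k) (P Q : g × k), B P (c • Q) = c • B P Q) ∧
     (∀ P Q S : g × k, B (B P Q) S + B (B Q S) P + B (B S P) Q = 0)) := by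
  have hz := stmt5_aux_zero ω hskew hinv
  have key := stmt5_aux_r r hr
  have hωz : ∀ X Y Z : g,
      ω (r (⁅r X, Y⁆ + ⁅X, r Y⁆)) Z + ω (⁅r X, Y⁆ + ⁅X, r Y⁆) (r Z) = 0 := by
    intro X Y Z
    rw [key X Y]
    simp only [map_add, LinearMap.add_apply]
    rw [hz, hz, hz, hz]; ring
  refine ⟨?_, ?_, ?_, ?_, ?_, ?_, ?_, ?_⟩
  · intro X Y
    show ω (r X) Y + ω X (r Y) = -(ω (r Y) X + ω Y (r X))
    rw [hskew (r X) Y, hskew X (r Y)]; ring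
  · intro X Y Z
    beta_reduce
    rw [hωz X Y Z, hωz Y Z X, hωz Z X Y]; ring
  · intro P
    beta_reduce
    refine Prod.ext ?_ ?_
    · show ⁅r P.1, P.1⁆ + ⁅P.1, r P.1⁆ = 0
      rw [← lie_skew (r P.1) P.1]; abel
    · show ω (r P.1) P.1 + ω P.1 (r P.1) = 0
      rw [hskew (r P.1) P.1]; ring
  · intro P P' Q
    beta_reduce
    refine Prod.ext ?_ ?_
    · simp only [Prod.fst_add, map_add, add_lie]; abel
    · simp only [Prod.snd_add, Prod.fst_add, map_add, LinearMap.add_apply]; ring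
  · intro P Q Q'
    beta_reduce
    refine Prod.ext ?_ ?_
    · simp only [Prod.fst_add, map_add, lie_add]; abel
    · simp only [Prod.snd_add, Prod.fst_add, map_add, LinearMap.add_apply]; ring
  · intro c P Q
    beta_reduce
    refine Prod.ext ?_ ?_
    · simp only [Prod.smul_fst, map_smul, smul_lie, smul_add]
    · simp only [Prod.smul_snd, Prod.smul_fst, map_smul, LinearMap.smul_apply,
        smul_add, smul_eq_mul]
      ring
  · intro c P Q
    beta_reduce
    refine Prod.ext ?_ ?_
    · simp only [Prod.smul_fst, map_smul, lie_smul, smul_add]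
    · simp only [Prod.smul_snd, Prod.smul_fst, map_smul, LinearMap.smul_apply,
        smul_add, smul_eq_mul]
      ring
  · intro P Q S
    beta_reduce
    refine Prod.ext ?_ ?_
    · show (⁅r (⁅r P.1, Q.1⁆ + ⁅P.1, r Q.1⁆), S.1⁆ + ⁅⁅r P.1, Q.1⁆ + ⁅P.1, r Q.1⁆, r S.1⁆) +
        (⁅r (⁅r Q.1, S.1⁆ + ⁅Q.1, r S.1⁆), P.1⁆ + ⁅⁅r Q.1, S.1⁆ + ⁅Q.1, r S.1⁆, r P.1⁆) +
        (⁅r (⁅r S.1, P.1⁆ + ⁅S.1, r P.1⁆), Q.1⁆ + ⁅⁅r S.1, P.1⁆ + ⁅S.1, r P.1⁆, r Q.1⁆) = 0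
      exact stmt5_aux_brkjac r hr P.1 Q.1 S.1
    · show (ω (r (⁅r P.1, Q.1⁆ + ⁅P.1, r Q.1⁆)) S.1 + ω (⁅r P.1, Q.1⁆ + ⁅P.1, r Q.1⁆) (r S.1)) +
        (ω (r (⁅r Q.1, S.1⁆ + ⁅Q.1, r S.1⁆)) P.1 + ω (⁅r Q.1, S.1⁆ + ⁅Q.1, r S.1⁆) (r P.1)) +
        (ω (r (⁅r S.1, P.1⁆ + ⁅S.1, r P.1⁆)) Q.1 + ω (⁅r S.1, P.1⁆ + ⁅S.1, r P.1⁆) (r Q.1)) = 0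
      rw [hωz, hωz, hωz]; ring
end

section
/- Let k = ℚ(q,λ,μ) (λ² ≠ μ², q ≠ 0), A an associative k-algebra, W a left A-module, and let A(λ), A(μ), B(λ), B(μ), D(λ), D(μ) ∈ A and Ω ∈ W, a(λ), a(μ), d(λ), d(μ) ∈ k satisfy: A(x)Ω = a(x)Ω, D(x)Ω = d(x)Ω for x ∈ {λ,μ}, and the exchange relations A(λ)B(μ) = ((μ²−λ²q⁻²)/(μ²−λ²)) B(μ)A(λ) − (2λμ/(μ²−λ²))(1−q⁻²) B(λ)A(μ), and D(λ)B(μ) = (2λμ/(μ²−λ²))(q²−1) B(λ)D(μ) + ((μ²−λ²q²)/(μ²−λ²)) B(μ)D(λ). Then (A(λ)+D(λ)) B(μ)Ω = Λ(λ,μ) B(μ)Ω + (2λμ/(μ²−λ²))(q−q⁻¹)(q d(μ) − q⁻¹ a(μ)) B(λ)Ω, where Λ(λ,μ) = a(λ)(λ²q⁻²−μ²)/(λ²−μ²) + d(λ)(λ²q²−μ²)/(λ²−μ²). In particular, if a(μ) = q² d(μ) then B(μ)Ω is an eigenvector of A(λ)+D(λ) with eigenvalue Λ(λ,μ). -/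
/-- The field `ℚ(q, λ, μ)`. -/
abbrev Stmt15F : Type := FractionRing (MvPolynomial (Fin 3) ℚ)

noncomputable def stmt15q : Stmt15F := algebraMap (MvPolynomial (Fin 3) ℚ) _ (MvPolynomial.X 0)
noncomputable def stmt15lam : Stmt15F := algebraMap (MvPolynomial (Fin 3) ℚ) _ (MvPolynomial.X 1)
noncomputable def stmt15mu : Stmt15F := algebraMap (MvPolynomial (Fin 3) ℚ) _ (MvPolynomial.X 2)

lemma stmt15_q_ne : stmt15q ≠ 0 := by
  intro h
  have := IsFractionRing.injective (MvPolynomial (Fin 3) ℚ) Stmt15F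
    (by simpa [stmt15q] using h : algebraMap (MvPolynomial (Fin 3) ℚ) Stmt15F (MvPolynomial.X 0)
      = algebraMap (MvPolynomial (Fin 3) ℚ) Stmt15F 0)
  exact MvPolynomial.X_ne_zero 0 this

lemma stmt15_ml_ne : stmt15mu ^ 2 - stmt15lam ^ 2 ≠ 0 := by
  intro h
  have h2 : algebraMap (MvPolynomial (Fin 3) ℚ) Stmt15F
      ((MvPolynomial.X 2) ^ 2 - (MvPolynomial.X 1) ^ 2)
      = algebraMap (MvPolynomial (Fin 3) ℚ) Stmt15F 0 := by
    simpa [map_sub, map_pow, stmt15mu, stmt15lam] using h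
  have h3 := IsFractionRing.injective (MvPolynomial (Fin 3) ℚ) Stmt15F h2
  have := congrArg (MvPolynomial.eval fun i : Fin 3 => if i = 2 then (1:ℚ) else 0) h3
  simp at this

set_option maxHeartbeats 1000000 in
/-- the one-magnon algebraic Bethe Ansatz identity for the twisted
(principal realization) `A₁⁽¹⁾` nonultralocal lattice algebra. -/
theorem stmt15 {A : Type*} [Ring A] [Algebra Stmt15F A]
    {W : Type*} [AddCommGroup W] [Module A W]
    (Al Am Bl Bm Dl Dm : A) (Ω : W) (al am dl dm : Stmt15F)
    (hAl : Al • Ω = algebraMap Stmt15F A al • Ω)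
    (hAm : Am • Ω = algebraMap Stmt15F A am • Ω)
    (hDl : Dl • Ω = algebraMap Stmt15F A dl • Ω)
    (hDm : Dm • Ω = algebraMap Stmt15F A dm • Ω)
    (hAB : Al * Bm =
      algebraMap Stmt15F A
          ((stmt15mu ^ 2 - stmt15lam ^ 2 * (stmt15q⁻¹) ^ 2) / (stmt15mu ^ 2 - stmt15lam ^ 2)) *
          (Bm * Al) -
        algebraMap Stmt15F A
          ((2 * stmt15lam * stmt15mu / (stmt15mu ^ 2 - stmt15lam ^ 2)) * (1 - (stmt15q⁻¹) ^ 2)) *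
          (Bl * Am))
    (hDB : Dl * Bm =
      algebraMap Stmt15F A
          ((2 * stmt15lam * stmt15mu / (stmt15mu ^ 2 - stmt15lam ^ 2)) * (stmt15q ^ 2 - 1)) *
          (Bl * Dm) +
        algebraMap Stmt15F A
          ((stmt15mu ^ 2 - stmt15lam ^ 2 * stmt15q ^ 2) / (stmt15mu ^ 2 - stmt15lam ^ 2)) *
          (Bm * Dl)) :
    letI q := stmt15q
    letI lam := stmt15lam
    letI mu := stmt15mu
    letI Λ : Stmt15F := al * ((lam ^ 2 * (q⁻¹) ^ 2 - mu ^ 2) / (lam ^ 2 - mu ^ 2)) +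
      dl * ((lam ^ 2 * q ^ 2 - mu ^ 2) / (lam ^ 2 - mu ^ 2))
    ((Al + Dl) * Bm) • Ω =
      (algebraMap Stmt15F A Λ * Bm) • Ω +
        (algebraMap Stmt15F A
          ((2 * lam * mu / (mu ^ 2 - lam ^ 2)) * (q - q⁻¹) * (q * dm - q⁻¹ * am)) * Bl) • Ω ∧
    (am = q ^ 2 * dm →
      ((Al + Dl) * Bm) • Ω = (algebraMap Stmt15F A Λ * Bm) • Ω) := by
  set q := stmt15q with hqdef
  set lam := stmt15lam with hldef
  set mu := stmt15mu with hmdef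
  set Λ : Stmt15F := al * ((lam ^ 2 * (q⁻¹) ^ 2 - mu ^ 2) / (lam ^ 2 - mu ^ 2)) +
      dl * ((lam ^ 2 * q ^ 2 - mu ^ 2) / (lam ^ 2 - mu ^ 2)) with hΛ
  have hq : q ≠ 0 := stmt15_q_ne
  have hml : mu ^ 2 - lam ^ 2 ≠ 0 := stmt15_ml_ne
  have hlm : lam ^ 2 - mu ^ 2 ≠ 0 := by
    intro h; apply hml; linear_combination -h
  set c1 : Stmt15F := (mu ^ 2 - lam ^ 2 * (q⁻¹) ^ 2) / (mu ^ 2 - lam ^ 2) with hc1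
  set c2 : Stmt15F := (2 * lam * mu / (mu ^ 2 - lam ^ 2)) * (1 - (q⁻¹) ^ 2) with hc2
  set c3 : Stmt15F := (2 * lam * mu / (mu ^ 2 - lam ^ 2)) * (q ^ 2 - 1) with hc3
  set c4 : Stmt15F := (mu ^ 2 - lam ^ 2 * q ^ 2) / (mu ^ 2 - lam ^ 2) with hc4
  set f := algebraMap Stmt15F A with hf
  have key : ∀ (c x : Stmt15F) (X Y : A), Y • Ω = f x • Ω →
      (f c * (X * Y)) • Ω = (f (c * x) * X) • Ω := by
    intro c x X Y hY
    rw [mul_smul, mul_smul, hY, ← mul_smul, ← mul_smul]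
    congr 1
    rw [mul_assoc, ← Algebra.commutes x X, ← mul_assoc, ← map_mul]
  have main : ((Al + Dl) * Bm) • Ω =
      (f (c1 * al + c4 * dl) * Bm) • Ω + (f (c3 * dm - c2 * am) * Bl) • Ω := by
    rw [add_mul, add_smul, hAB, hDB, sub_smul, add_smul,
      key c1 al Bm Al hAl, key c2 am Bl Am hAm, key c3 dm Bl Dm hDm, key c4 dl Bm Dl hDl,
      map_add, map_sub, add_mul, sub_mul, add_smul, sub_smul]
    abel
  have hs1 : c1 * al + c4 * dl = Λ := by
    simp only [hc1, hc4, hΛ]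
    field_simp
    ring
  have hs2 : c3 * dm - c2 * am =
      (2 * lam * mu / (mu ^ 2 - lam ^ 2)) * (q - q⁻¹) * (q * dm - q⁻¹ * am) := by
    simp only [hc2, hc3]
    field_simp
  have part1 : ((Al + Dl) * Bm) • Ω =
      (f Λ * Bm) • Ω + (f ((2 * lam * mu / (mu ^ 2 - lam ^ 2)) * (q - q⁻¹) *
        (q * dm - q⁻¹ * am)) * Bl) • Ω := by
    rw [main, hs1, hs2]
  refine ⟨part1, fun ham => ?_⟩
  have : q * dm - q⁻¹ * am = 0 := by
    rw [ham]; field_simp; ring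
  rw [part1, this, mul_zero, map_zero, zero_mul, zero_smul, add_zero]
end

section
/- Let k = ℚ(q) with q not a root of unity, δ := q − q⁻¹, R := [[q,0,0,0],[0,1,δ,0],[0,0,1,0],[0,0,0,q]] and R₂₁ := P R P (P the flip). Let A be an associative k-algebra and M ∈ M₂(A), M = [[a,b],[c,d]], satisfying the reflection-equation-type relation R M₁ R₂₁ M₂ = M₂ R M₁ R₂₁ in M₄(A), where M₁ = M⊗I₂ and M₂ = I₂⊗M. Then there exists ε ∈ {1,−1} such that the quantum trace t := q^ε a + q^{−ε} d commutes with each of the four entries a, b, c, d of M. -/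
open Matrix

def stmt17Idx (p : Fin 2 × Fin 2) : Fin 4 := ⟨2 * p.1.val + p.2.val, by omega⟩

/-- View a 4×4 matrix as a matrix on `F² ⊗ F²`
(basis `e₁⊗e₁, e₁⊗e₂, e₂⊗e₁, e₂⊗e₂`). -/
def stmt17Tensor {F : Type*} (M : Matrix (Fin 4) (Fin 4) F) :
    Matrix (Fin 2 × Fin 2) (Fin 2 × Fin 2) F :=
  Matrix.of fun p q => M (stmt17Idx p) (stmt17Idx q)

/-- The flip operator `P(x⊗y) = y⊗x`. -/
def stmt17Flip {F : Type*} [CommRing F] : Matrix (Fin 2 × Fin 2) (Fin 2 × Fin 2) F :=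
  Matrix.of fun p q => if p.1 = q.2 ∧ p.2 = q.1 then 1 else 0

lemma stmt17Aux {K : Type*} [Field K] {A : Type*} [Ring A] [Algebra K A]
    (X : K) (hX : X ≠ 0) (a b c d : A)
    (h1 : (X * X) • (a * b) + ((X * X) • (b * d) - (X⁻¹ * X) • (b * d)) =
      b * a + ((X * X) • (a * b) + ((X * X) • (b * d) - (X * X⁻¹) • (b * d)) -
        ((X⁻¹ * X) • (a * b) + ((X⁻¹ * X) • (b * d) - (X⁻¹ * X⁻¹) • (b * d)))))
    (h2 : (X * X) • (c * a) - (X * X⁻¹) • (c * a) +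
      (a * c + ((X * X) • (d * c) - (X * X⁻¹) • (d * c) -
        ((X⁻¹ * X) • (d * c) - (X⁻¹ * X⁻¹) • (d * c)))) =
      (X * X) • (c * a) + ((X * X) • (d * c) - (X * X⁻¹) • (d * c)))
    (h3 : (X * X) • (c * b) - (X * X⁻¹) • (c * b) +
      (a * d + ((X * X) • (d * d) - (X * X⁻¹) • (d * d) -
        ((X⁻¹ * X) • (d * d) - (X⁻¹ * X⁻¹) • (d * d)))) =
      d * a + ((X * X) • (c * b) + ((X * X) • (d * d) - (X * X⁻¹) • (d * d)) -
        ((X⁻¹ * X) • (c * b) + ((X⁻¹ * X) • (d * d) - (X⁻¹ * X⁻¹) • (d * d)))))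
    (h4 : X • (d * b) - X⁻¹ • (d * b) + X • (b * d) = X • (d * b))
    (h5 : X • (c * d) = X • (d * c) + (X • (c * d) - X⁻¹ • (c * d))) :
    Commute (X • a + X⁻¹ • d) a ∧ Commute (X • a + X⁻¹ • d) b ∧
      Commute (X • a + X⁻¹ • d) c ∧ Commute (X • a + X⁻¹ • d) d := by
  refine ⟨?_, ?_, ?_, ?_⟩ <;>
    (show _ * _ = _ * _
     simp only [add_mul, mul_add, smul_mul_assoc, mul_smul_comm])
  · linear_combination (norm := match_scalars <;> (field_simp; try ring)) (-(X⁻¹)) • h3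
  · linear_combination (norm := match_scalars <;> (field_simp; try ring)) X • h1 - h4
  · linear_combination (norm := match_scalars <;> (field_simp; try ring)) X • h2 - h5
  · linear_combination (norm := match_scalars <;> (field_simp; try ring)) X • h3

set_option maxHeartbeats 2000000 in
/-- centrality of the q-trace for the sl₂ reflection-equation (braided
matrix) algebra: if `R M₁ R₂₁ M₂ = M₂ R M₁ R₂₁` then for some sign `ε` the quantum trace
`t = q^ε a + q^{−ε} d` commutes with all four entries `a, b, c, d` of `M`. -/
theorem stmt17 {A : Type*} [Ring A] [Algebra (RatFunc ℚ) A]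
    (hq : ∀ n : ℕ, n ≠ 0 → (RatFunc.X : RatFunc ℚ) ^ n ≠ 1)
    (a b c d : A) :
    letI q : RatFunc ℚ := RatFunc.X
    letI δ : RatFunc ℚ := q - q⁻¹
    letI R : Matrix (Fin 2 × Fin 2) (Fin 2 × Fin 2) (RatFunc ℚ) :=
      stmt17Tensor (!![q, 0, 0, 0; 0, 1, δ, 0; 0, 0, 1, 0; 0, 0, 0, q])
    letI R21 : Matrix (Fin 2 × Fin 2) (Fin 2 × Fin 2) (RatFunc ℚ) := stmt17Flip * R * stmt17Flip
    letI Mmat : Matrix (Fin 2) (Fin 2) A := !![a, b; c, d]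
    letI M₁ : Matrix (Fin 2 × Fin 2) (Fin 2 × Fin 2) A :=
      Matrix.of fun p q => Mmat p.1 q.1 * (if p.2 = q.2 then 1 else 0)
    letI M₂ : Matrix (Fin 2 × Fin 2) (Fin 2 × Fin 2) A :=
      Matrix.of fun p q => (if p.1 = q.1 then 1 else 0) * Mmat p.2 q.2
    R.map (algebraMap (RatFunc ℚ) A) * M₁ * R21.map (algebraMap (RatFunc ℚ) A) * M₂ =
      M₂ * R.map (algebraMap (RatFunc ℚ) A) * M₁ * R21.map (algebraMap (RatFunc ℚ) A) →
    ∃ ε : ℤ, (ε = 1 ∨ ε = -1) ∧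
      (letI t : A := algebraMap (RatFunc ℚ) A (q ^ ε) * a +
        algebraMap (RatFunc ℚ) A (q ^ (-ε)) * d
       Commute t a ∧ Commute t b ∧ Commute t c ∧ Commute t d) := by
  intro h
  have h1 := congrFun (congrFun h ((0 : Fin 2), (0 : Fin 2))) ((0 : Fin 2), (1 : Fin 2))
  have h2 := congrFun (congrFun h ((0 : Fin 2), (1 : Fin 2))) ((0 : Fin 2), (0 : Fin 2))
  have h3 := congrFun (congrFun h ((0 : Fin 2), (1 : Fin 2))) ((0 : Fin 2), (1 : Fin 2))
  have h4 := congrFun (congrFun h ((0 : Fin 2), (1 : Fin 2))) ((1 : Fin 2), (1 : Fin 2))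
  have h5 := congrFun (congrFun h ((1 : Fin 2), (1 : Fin 2))) ((0 : Fin 2), (1 : Fin 2))
  clear h
  simp [Matrix.mul_apply, Fintype.sum_prod_type, Fin.sum_univ_two, stmt17Tensor, stmt17Idx,
    stmt17Flip, Matrix.map_apply] at h1 h2 h3 h4 h5
  simp only [Algebra.algebraMap_eq_smul_one, smul_mul_assoc, mul_smul_comm, smul_smul,
    one_mul, mul_one, mul_assoc, sub_mul, mul_sub, mul_add, add_mul, smul_sub, sub_smul,
    smul_add] at h1 h2 h3 h4 h5
  refine ⟨1, Or.inl rfl, ?_⟩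
  simp only [zpow_one, _root_.zpow_neg, zpow_one, ← Algebra.smul_def]
  exact stmt17Aux RatFunc.X RatFunc.X_ne_zero a b c d h1 h2 h3 h4 h5
end
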